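/- Let q = p^k be a prime power and let S = {a ∈ F_q : tr_{F_q/F_p}(a) = 0}, where tr_{F_q/F_p} denotes the field trace. Then irreg(S) = p. -/

import Mathlib

noncomputable section

/-- The standard additive character of a finite field of characteristic `p`. -/
def psiChar (p : ℕ) (Fq : Type) [Field Fq] [Fintype Fq] [Algebra (ZMod p) Fq] (u : Fq) : ℂ :=
  Complex.exp (2 * Real.pi * Complex.I * ((Algebra.trace (ZMod p) Fq u).val : ℂ) / (p : ℂ))

/-- Fourier transform of the indicator function of `S ⊆ F_q`. -/
def hatQ (p : ℕ) (Fq : Type) [Field Fq] [Fintype Fq] [Algebra (ZMod p) Fq]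
    (S : Set Fq) (b : Fq) : ℂ :=
  (Fintype.card Fq : ℂ)⁻¹ * ∑ a : Fq, S.indicator (fun _ => (1 : ℂ)) a * psiChar p Fq (-(a * b))

/-- The irregularity of a subset `S ⊆ F_q`. -/
def irregQ (p : ℕ) (Fq : Type) [Field Fq] [Fintype Fq] [Algebra (ZMod p) Fq] (S : Set Fq) : ℝ :=
  ((Fintype.card Fq : ℝ) / S.ncard) * ∑ b : Fq, ‖hatQ p Fq S b‖

/-!
Writing the indicator of `S = ker tr` as `p⁻¹ ∑_{t ∈ 𝔽_p} ψ(t a)`, orthogonality of the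
characters `a ↦ ψ(a c)` shows that `1̂_S` equals `1/p` on the prime field `𝔽_p ⊆ 𝔽_q` and
vanishes elsewhere. Hence `∑_b |1̂_S(b)| = 1`, while `1̂_S(0) = |S|/q` gives `|S| = q/p`.
-/

open Finset

def traceAddChar (p : ℕ) [NeZero p] (F : Type*) [CommRing F] [Algebra (ZMod p) F] :
    AddChar F ℂ :=
  ZMod.stdAddChar.compAddMonoidHom (Algebra.trace (ZMod p) F).toAddMonoidHom

section

variable {p : ℕ} [NeZero p] {F : Type*} [CommRing F] [Algebra (ZMod p) F]

lemma traceAddChar_apply (u : F) :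
    traceAddChar p F u = ZMod.stdAddChar (Algebra.trace (ZMod p) F u) := rfl

lemma indicator_setOf_trace_eq_zero (a : F) :
    {x : F | Algebra.trace (ZMod p) F x = 0}.indicator (fun _ => (1 : ℂ)) a
      = (p : ℂ)⁻¹ * ∑ t : ZMod p, traceAddChar p F (algebraMap (ZMod p) F t * a) := by
  have hp : (p : ℂ) ≠ 0 := Nat.cast_ne_zero.mpr (NeZero.ne p)
  simp_rw [traceAddChar_apply, ← Algebra.smul_def, map_smul, smul_eq_mul,
    AddChar.sum_mulShift _ (ZMod.isPrimitive_stdAddChar p), ZMod.card, Set.indicator_apply,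
    Set.mem_ofPred_eq]
  split_ifs <;> simp [hp]

end

section

variable {p : ℕ} {F : Type} [Field F] [Fintype F] [Algebra (ZMod p) F]

lemma psiChar_eq_traceAddChar [NeZero p] (u : F) : psiChar p F u = traceAddChar p F u := by
  rw [traceAddChar_apply, ← ZMod.natCast_zmod_val (Algebra.trace (ZMod p) F u),
    ← Int.cast_natCast, ZMod.stdAddChar_coe]
  simp [psiChar]

lemma hatQ_zero (S : Set F) : hatQ p F S 0 = S.ncard / Fintype.card F := by
  classical
  have hψ : psiChar p F 0 = 1 := by simp [psiChar]
  simp only [hatQ, mul_zero, neg_zero, hψ, mul_one, Set.indicator_apply, sum_boole]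
  rw [Set.ncard_eq_toFinset_card', ← Set.filter_mem_univ_eq_toFinset, div_eq_inv_mul]

variable [Fact p.Prime]

lemma traceAddChar_isPrimitive : (traceAddChar p F).IsPrimitive := by
  refine AddChar.IsPrimitive.of_ne_one fun h => ?_
  obtain ⟨u, hu⟩ := Algebra.trace_surjective (ZMod p) F 1
  have h1 := DFunLike.congr_fun h u
  rw [traceAddChar_apply, hu, AddChar.one_apply,
    ← AddChar.map_zero_eq_one (ZMod.stdAddChar (N := p)), ZMod.injective_stdAddChar.eq_iff] at h1
  exact one_ne_zero h1

lemma hatQ_setOf_trace_eq_zero (b : F) :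
    hatQ p F {x : F | Algebra.trace (ZMod p) F x = 0} b
      = (Set.range (algebraMap (ZMod p) F)).indicator (fun _ => (p : ℂ)⁻¹) b := by
  classical
  have hinj := (algebraMap (ZMod p) F).injective
  calc hatQ p F {x : F | Algebra.trace (ZMod p) F x = 0} b
      = (Fintype.card F : ℂ)⁻¹ * (p : ℂ)⁻¹ *
          ∑ t : ZMod p, ∑ a : F, traceAddChar p F (a * (algebraMap (ZMod p) F t - b)) := by
        rw [hatQ, mul_assoc]
        congr 1
        simp_rw [indicator_setOf_trace_eq_zero, psiChar_eq_traceAddChar, mul_assoc, sum_mul,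
          ← AddChar.map_add_eq_mul, ← mul_sum]
        rw [sum_comm]
        refine congrArg _ (sum_congr rfl fun t _ => sum_congr rfl fun a _ => congrArg _ ?_)
        ring
    _ = (Fintype.card F : ℂ)⁻¹ * (p : ℂ)⁻¹ *
          ∑ t : ZMod p, if algebraMap (ZMod p) F t = b then (Fintype.card F : ℂ) else 0 := by
        simp_rw [AddChar.sum_mulShift _ traceAddChar_isPrimitive, sub_eq_zero, Nat.cast_ite,
          Nat.cast_zero]
    _ = _ := by
        rw [Fintype.sum_ite_eq_ite_exists _ fun i j hi hj => hinj (hi.trans hj.symm),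
          Set.indicator_apply]
        simp only [Set.mem_range]
        split_ifs
        · field_simp
        · rw [mul_zero]

lemma sum_norm_hatQ_setOf_trace_eq_zero :
    ∑ b : F, ‖hatQ p F {x : F | Algebra.trace (ZMod p) F x = 0} b‖ = 1 := by
  classical
  have hp : (p : ℝ) ≠ 0 := Nat.cast_ne_zero.mpr (Fact.out : p.Prime).ne_zero
  have himage : univ.filter (· ∈ Set.range (algebraMap (ZMod p) F))
      = univ.map ⟨algebraMap (ZMod p) F, (algebraMap (ZMod p) F).injective⟩ := by
    ext; simp
  simp_rw [hatQ_setOf_trace_eq_zero, norm_indicator_eq_indicator_norm, Set.indicator_apply]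
  rw [← sum_filter]
  simp_rw [himage, sum_map, sum_const, card_univ, ZMod.card, norm_inv, Complex.norm_natCast,
    nsmul_eq_mul]
  exact mul_inv_cancel₀ hp

lemma ncard_setOf_trace_eq_zero_mul_eq_card :
    {x : F | Algebra.trace (ZMod p) F x = 0}.ncard * p = Fintype.card F := by
  have hq : (Fintype.card F : ℂ) ≠ 0 := Nat.cast_ne_zero.mpr Fintype.card_ne_zero
  have hp : (p : ℂ) ≠ 0 := Nat.cast_ne_zero.mpr (Fact.out : p.Prime).ne_zero
  have h0 : (0 : F) ∈ Set.range (algebraMap (ZMod p) F) := ⟨0, map_zero _⟩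
  have h := hatQ_zero (p := p) {x : F | Algebra.trace (ZMod p) F x = 0}
  rw [hatQ_setOf_trace_eq_zero, Set.indicator_of_mem h0, eq_div_iff hq,
    inv_mul_eq_iff_eq_mul₀ hp] at h
  exact_mod_cast (h.trans (mul_comm _ _)).symm

end

theorem irreg_trace_zero_set_general (p : ℕ) (hp : p.Prime)
    (Fq : Type) [Field Fq] [Fintype Fq] [Algebra (ZMod p) Fq] :
    irregQ p Fq {a : Fq | Algebra.trace (ZMod p) Fq a = 0} = p := by
  have : Fact p.Prime := ⟨hp⟩
  have hcard := ncard_setOf_trace_eq_zero_mul_eq_card (p := p) (F := Fq)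
  have hS : ({a : Fq | Algebra.trace (ZMod p) Fq a = 0}.ncard : ℝ) ≠ 0 :=
    Nat.cast_ne_zero.mpr (left_ne_zero_of_mul (hcard ▸ Fintype.card_ne_zero))
  rw [irregQ, sum_norm_hatQ_setOf_trace_eq_zero, mul_one, ← hcard, Nat.cast_mul,
    mul_div_cancel_left₀ _ hS]

/-- The irregularity of the trace-zero hyperplane `S ⊆ F_q` equals `p`. -/
theorem irreg_trace_zero_set (p k : ℕ) (hp : p.Prime) (hk : 1 ≤ k)
    (Fq : Type) [Field Fq] [Fintype Fq] [Algebra (ZMod p) Fq]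
    (hcard : Fintype.card Fq = p ^ k) :
    irregQ p Fq {a : Fq | Algebra.trace (ZMod p) Fq a = 0} = p :=
  irreg_trace_zero_set_general p hp Fq
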